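/- arXiv:1504.04982 — 3 statements merged into one kernel-verified Lean document; each statement's English description precedes it below -/
import Mathlib

section
/- Let X be a complex Banach space, p > 0, and let S be an evolution system on X satisfying S(t+p, s+p) = S(t, s) for all real s, t, and sup_{(t,s) ∈ [0,p]²} ‖S(t,s)‖ < ∞. Then the following are equivalent: (a) there exists γ > 0 with inf_{t ≥ 0} e^{−γt} ‖S(t, 0)‖ > 0; (b) there exists κ > 1 with inf_{k ∈ ℕ} κ^{−k} ‖S(p, 0)^k‖ > 0; (c) the spectral radius of S(p, 0) is strictly greater than 1. -/
open Filter Topology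

section Helpers

variable {X : Type*} [NormedAddCommGroup X] [NormedSpace ℂ X]
  {p : ℝ} {S : ℝ → ℝ → (X →L[ℂ] X)}

lemma PEEI_shift (hper : ∀ s t : ℝ, S (t + p) (s + p) = S t s) :
    ∀ (k : ℕ) (s t : ℝ), S (t + k * p) (s + k * p) = S t s := by
  intro k
  induction k with
  | zero => simp
  | succ n ih =>
    intro s t
    have h1 : t + ((n : ℕ) + 1 : ℕ) * p = (t + p) + (n : ℕ) * p := by push_cast; ring
    have h2 : s + ((n : ℕ) + 1 : ℕ) * p = (s + p) + (n : ℕ) * p := by push_cast; ring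
    rw [h1, h2, ih, hper]

lemma PEEI_pow (hid : ∀ s : ℝ, S s s = 1)
    (hcomp : ∀ s r t : ℝ, S t s = (S t r).comp (S r s))
    (hper : ∀ s t : ℝ, S (t + p) (s + p) = S t s) :
    ∀ k : ℕ, S (k * p) 0 = (S p 0) ^ k := by
  intro k
  induction k with
  | zero => simpa using hid 0
  | succ n ih =>
    have h2 : S (((n:ℕ) + 1 : ℕ) * p) ((n:ℕ) * p) = S p 0 := by
      have h := PEEI_shift hper n 0 p
      have h1 : ((n : ℕ) + 1 : ℕ) * p = p + (n : ℕ) * p := by push_cast; ring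
      rw [h1]
      simpa using h
    calc S (((n:ℕ)+1:ℕ) * p) 0 = (S (((n:ℕ)+1:ℕ)*p) ((n:ℕ)*p)).comp (S ((n:ℕ)*p) 0) :=
          hcomp 0 ((n:ℕ)*p) _
      _ = (S p 0).comp ((S p 0) ^ n) := by rw [h2, ih]
      _ = (S p 0) ^ (n+1) := by rw [pow_succ']; rfl

lemma PEEI_lower {A : Type*} [NormedRing A] {κ c : ℝ} (hκ0 : 0 < κ) {V : A}
    (h : ∀ k : ℕ, c ≤ κ ^ (-(k:ℤ)) * ‖V ^ k‖) : ∀ k : ℕ, c * κ ^ k ≤ ‖V ^ k‖ := by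
  intro k
  have hk := h k
  rw [zpow_neg, zpow_natCast] at hk
  calc c * κ ^ k ≤ ((κ ^ k)⁻¹ * ‖V ^ k‖) * κ ^ k :=
        mul_le_mul_of_nonneg_right hk (by positivity)
    _ = ‖V ^ k‖ := by field_simp

end Helpers

/-- For a `p`-periodic evolution system `S` on a complex Banach space `X`
that is bounded on `[0,p]²`, the following are equivalent: (a) exponential instability
`∃ γ > 0, inf_{t ≥ 0} e^{−γt} ‖S(t,0)‖ > 0`; (b) `∃ κ > 1, inf_k κ^{−k} ‖S(p,0)^k‖ > 0`;
(c) the spectral radius of the monodromy operator `S(p,0)` exceeds `1`. -/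
theorem periodic_evolution_exponential_instability_tfae
    (X : Type*) [NormedAddCommGroup X] [NormedSpace ℂ X] [CompleteSpace X]
    (p : ℝ) (hp : 0 < p) (S : ℝ → ℝ → (X →L[ℂ] X))
    (hid : ∀ s : ℝ, S s s = 1)
    (hcomp : ∀ s r t : ℝ, S t s = (S t r).comp (S r s))
    (hper : ∀ s t : ℝ, S (t + p) (s + p) = S t s)
    (hbdd : ∃ C : ℝ, ∀ t ∈ Set.Icc (0:ℝ) p, ∀ s ∈ Set.Icc (0:ℝ) p, ‖S t s‖ ≤ C) :
    ((∃ γ : ℝ, 0 < γ ∧ ∃ c : ℝ, 0 < c ∧ ∀ t : ℝ, 0 ≤ t → c ≤ Real.exp (-γ * t) * ‖S t 0‖) ↔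
      (∃ κ : ℝ, 1 < κ ∧ ∃ c : ℝ, 0 < c ∧ ∀ k : ℕ, c ≤ κ ^ (-(k:ℤ)) * ‖(S p 0) ^ k‖)) ∧
    ((∃ κ : ℝ, 1 < κ ∧ ∃ c : ℝ, 0 < c ∧ ∀ k : ℕ, c ≤ κ ^ (-(k:ℤ)) * ‖(S p 0) ^ k‖) ↔
      (1 : ENNReal) < spectralRadius ℂ (S p 0)) := by

  obtain ⟨C, hC⟩ := hbdd
  set V := S p 0 with hV
  have hpow : ∀ k : ℕ, S (k * p) 0 = V ^ k := PEEI_pow hid hcomp hper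
  constructor
  · constructor
    · -- (a) → (b)
      rintro ⟨γ, hγ, c, hc, h⟩
      refine ⟨Real.exp (γ * p), Real.one_lt_exp_iff.mpr (by positivity), c, hc, fun k => ?_⟩
      have ht : (0:ℝ) ≤ (k:ℝ) * p := by positivity
      have := h ((k:ℝ) * p) ht
      rw [hpow k] at this
      have hexp : Real.exp (γ * p) ^ (-(k:ℤ)) = Real.exp (-γ * ((k:ℝ) * p)) := by
        rw [zpow_neg, zpow_natCast, ← Real.exp_nat_mul, ← Real.exp_neg]
        ring_nf
      rw [hexp]
      exact this
    · -- (b) → (a)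
      rintro ⟨κ, hκ, c, hc, h⟩
      have hκ0 : (0:ℝ) < κ := lt_trans one_pos hκ
      have hnorm : ∀ k : ℕ, c * κ ^ k ≤ ‖V ^ k‖ := PEEI_lower hκ0 h
      have hCpos : 0 < C := by
        have h1 : c * κ ^ 1 ≤ ‖V ^ 1‖ := hnorm 1
        have h2 : ‖V‖ ≤ C := hC p ⟨hp.le, le_refl p⟩ 0 ⟨le_refl 0, hp.le⟩
        rw [pow_one, pow_one] at h1
        nlinarith
      have hγpos : 0 < Real.log κ / p := div_pos (Real.log_pos hκ) hp
      refine ⟨Real.log κ / p, hγpos, c / C, by positivity, fun t ht => ?_⟩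
      set γ := Real.log κ / p with hγ
      have hγp : γ * p = Real.log κ := div_mul_cancel₀ _ hp.ne'
      have hexpγ : Real.exp (γ * p) = κ := by rw [hγp, Real.exp_log hκ0]
      set k := ⌊t / p⌋₊ with hk
      have hk1 : (k:ℝ) * p ≤ t := by
        have := Nat.floor_le (by positivity : (0:ℝ) ≤ t / p)
        calc (k:ℝ) * p ≤ (t / p) * p := mul_le_mul_of_nonneg_right this hp.le
          _ = t := by field_simp
      have hk2 : t ≤ ((k:ℝ) + 1) * p := by
        have := (Nat.lt_floor_add_one (t / p)).le
        calc t = (t / p) * p := by field_simp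
          _ ≤ ((k:ℝ) + 1) * p := mul_le_mul_of_nonneg_right this hp.le
      have hSb : S (((k+1:ℕ):ℝ) * p) t = S p (t - (k:ℝ) * p) := by
        have := PEEI_shift hper k (t - (k:ℝ) * p) p
        have e1 : (t - (k:ℝ) * p) + (k:ℝ) * p = t := by ring
        have e2 : p + (k:ℝ) * p = ((k+1:ℕ):ℝ) * p := by push_cast; ring
        rw [e1, e2] at this
        exact this
      have hSbnorm : ‖S (((k+1:ℕ):ℝ) * p) t‖ ≤ C := by
        rw [hSb]
        refine hC p ⟨hp.le, le_refl p⟩ (t - (k:ℝ) * p) ⟨by linarith, by linarith⟩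
      have hsplit : V ^ (k+1) = (S (((k+1:ℕ):ℝ) * p) t).comp (S t 0) := by
        rw [← hpow (k+1)]
        exact hcomp 0 t _
      have hST : ‖V ^ (k+1)‖ ≤ C * ‖S t 0‖ := by
        rw [hsplit]
        calc ‖(S (((k+1:ℕ):ℝ) * p) t).comp (S t 0)‖ ≤ ‖S (((k+1:ℕ):ℝ) * p) t‖ * ‖S t 0‖ :=
              ContinuousLinearMap.opNorm_comp_le _ _
          _ ≤ C * ‖S t 0‖ := mul_le_mul_of_nonneg_right hSbnorm (norm_nonneg _)
      have hD : c * κ ^ (k+1) ≤ C * ‖S t 0‖ := le_trans (hnorm (k+1)) hST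
      have hexpt : (κ ^ (k+1))⁻¹ ≤ Real.exp (-γ * t) := by
        have e1 : Real.exp (-γ * (((k:ℝ)+1) * p)) = (κ ^ (k+1))⁻¹ := by
          have e0 : -γ * (((k:ℝ)+1) * p) = -(((k+1:ℕ):ℝ) * (γ * p)) := by push_cast; ring
          rw [e0, Real.exp_neg, Real.exp_nat_mul, hexpγ]
        rw [← e1]
        apply Real.exp_le_exp.mpr
        nlinarith
      have hc2 : c ≤ C * ‖S t 0‖ * Real.exp (-γ * t) := by
        have e : (c * κ ^ (k+1)) * (κ ^ (k+1))⁻¹ = c := by field_simp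
        calc c = (c * κ ^ (k+1)) * (κ ^ (k+1))⁻¹ := e.symm
          _ ≤ (C * ‖S t 0‖) * Real.exp (-γ * t) :=
            mul_le_mul hD hexpt (by positivity) (by positivity)
      rw [div_le_iff₀ hCpos]
      exact hc2.trans_eq (by ring)
  · constructor
    · -- (b) → (c)
      rintro ⟨κ, hκ, c, hc, h⟩
      have hκ0 : (0:ℝ) < κ := lt_trans one_pos hκ
      have hnorm : ∀ k : ℕ, c * κ ^ k ≤ ‖V ^ k‖ := PEEI_lower hκ0 h
      set κ' := (1 + κ) / 2 with hκ'
      have hκ'1 : 1 < κ' := by rw [hκ']; linarith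
      have hκ'κ : κ' < κ := by rw [hκ']; linarith
      have htend : Tendsto (fun k : ℕ => c ^ (1/(k:ℝ))) atTop (𝓝 1) := by
        have he : ∀ k : ℕ, c ^ (1/(k:ℝ)) = Real.exp (Real.log c * (1/(k:ℝ))) := fun k =>
          Real.rpow_def_of_pos hc _
        rw [tendsto_congr he]
        have h0 : Tendsto (fun k : ℕ => Real.log c * (1/(k:ℝ))) atTop (𝓝 0) := by
          simpa using (tendsto_const_nhds (x := Real.log c)).mul tendsto_one_div_atTop_nhds_zero_nat
        simpa [Function.comp_def] using (Real.continuous_exp.tendsto 0).comp h0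
      have hev : ∀ᶠ k : ℕ in atTop, κ'/κ ≤ c ^ (1/(k:ℝ)) :=
        htend.eventually (eventually_ge_nhds (by rw [div_lt_one hκ0]; linarith))
      have hev2 : ∀ᶠ k : ℕ in atTop,
          ENNReal.ofReal κ' ≤ ENNReal.ofReal (‖V ^ k‖ ^ (1/(k:ℝ))) := by
        filter_upwards [hev, eventually_ge_atTop 1] with k hk hk1
        apply ENNReal.ofReal_le_ofReal
        have hkR : (0:ℝ) < (k:ℝ) := by exact_mod_cast hk1
        have e : (c * κ ^ k) ^ (1/(k:ℝ)) = c ^ (1/(k:ℝ)) * κ := by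
          rw [Real.mul_rpow hc.le (by positivity), ← Real.rpow_natCast κ k,
            ← Real.rpow_mul hκ0.le, mul_one_div_cancel hkR.ne', Real.rpow_one]
        calc κ' = (κ'/κ) * κ := by field_simp
          _ ≤ c ^ (1/(k:ℝ)) * κ := mul_le_mul_of_nonneg_right hk hκ0.le
          _ = (c * κ ^ k) ^ (1/(k:ℝ)) := e.symm
          _ ≤ ‖V ^ k‖ ^ (1/(k:ℝ)) :=
            Real.rpow_le_rpow (by positivity) (hnorm k) (by positivity)
      have hfinal : ENNReal.ofReal κ' ≤ spectralRadius ℂ V :=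
        ge_of_tendsto (spectrum.pow_norm_pow_one_div_tendsto_nhds_spectralRadius V) hev2
      refine lt_of_lt_of_le ?_ hfinal
      rw [← ENNReal.ofReal_one]
      exact (ENNReal.ofReal_lt_ofReal_iff (by linarith)).mpr hκ'1
    · -- (c) → (b)
      intro hr
      have hle1 : spectralRadius ℂ V ≤ ↑‖V‖₊ * ↑‖(1 : X →L[ℂ] X)‖₊ := by
        simpa using spectrum.spectralRadius_le_pow_nnnorm_pow_one_div ℂ V 0
      have hX : Nontrivial X := by
        by_contra hX
        rw [not_nontrivial_iff_subsingleton] at hX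
        have hV0 : V = 0 := ContinuousLinearMap.ext fun x => Subsingleton.elim _ _
        rw [hV0] at hr hle1
        simp only [nnnorm_zero, ENNReal.coe_zero, zero_mul, nonpos_iff_eq_zero] at hle1
        rw [hle1] at hr
        exact absurd hr (by simp)

      have hone : ‖(1 : X →L[ℂ] X)‖ = 1 := ContinuousLinearMap.norm_id
      have honen : (‖(1 : X →L[ℂ] X)‖₊ : ENNReal) = 1 := by
        have := ofReal_norm (1 : X →L[ℂ] X); rw [hone, ENNReal.ofReal_one] at this; exact this.symm
      have hfin : spectralRadius ℂ V ≠ ⊤ :=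
        ne_top_of_le_ne_top (by rw [honen, mul_one]; exact ENNReal.coe_ne_top) hle1
      set κ := (spectralRadius ℂ V).toReal with hκdef
      have hκ1 : 1 < κ := by
        have := (ENNReal.toReal_lt_toReal (by simp) hfin).mpr hr
        simpa using this
      have hbound : ∀ n : ℕ, κ ^ (n+1) ≤ ‖V ^ (n+1)‖ := by
        intro n
        have h1 : spectralRadius ℂ V ≤ (↑‖V ^ (n+1)‖₊ : ENNReal) ^ (1/((n:ℝ)+1)) := by
          have := spectrum.spectralRadius_le_pow_nnnorm_pow_one_div ℂ V n
          rw [honen, ENNReal.one_rpow, mul_one] at this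
          exact this
        have hpos : (0:ℝ) < (n:ℝ) + 1 := by positivity
        have h2 : spectralRadius ℂ V ^ ((n:ℝ)+1) ≤ (↑‖V ^ (n+1)‖₊ : ENNReal) := by
          have := ENNReal.rpow_le_rpow h1 hpos.le
          rwa [← ENNReal.rpow_mul, one_div_mul_cancel hpos.ne', ENNReal.rpow_one] at this
        have h3 : spectralRadius ℂ V ^ (n+1) ≤ (↑‖V ^ (n+1)‖₊ : ENNReal) := by
          rw [← ENNReal.rpow_natCast]
          convert h2 using 2
          push_cast; ring
        have h4 := ENNReal.toReal_mono ENNReal.coe_ne_top h3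
        rwa [ENNReal.toReal_pow, ENNReal.coe_toReal, coe_nnnorm] at h4
      refine ⟨κ, hκ1, 1, one_pos, fun k => ?_⟩
      match k with
      | 0 => simp [hone]
      | (n+1) =>
        rw [zpow_neg, zpow_natCast, inv_mul_eq_div, le_div_iff₀ (by positivity), one_mul]
        exact hbound n
end

section
/- Let S be an evolution system on ℓ²(ℤ; ℂ^d), let τ > 0, let T be the left shift on ℓ²(ℤ; ℂ^d), and assume S(t + τ, s + τ) = T^{−1} S(t, s) T for all real t, s, and sup_{(t,s) ∈ [0,τ]²} ‖S(t,s)‖ < ∞. Then sup_{t ≥ 0} ‖S(t, 0)‖ < ∞ if and only if sup_{m ∈ ℕ} ‖(T S(τ, 0))^m‖ < ∞; in particular ‖S(mτ, 0)‖ = ‖(T S(τ, 0))^m‖ for every m ∈ ℕ. -/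
/-!
Conjugating by `T` shifts the evolution system by one period, so `S(t + mτ, s + mτ)` is
`S(t, s)` conjugated by `Tᵐ`. Combined with the cocycle identity this gives
`S(mτ, 0) = T⁻ᵐ (T S(τ, 0))ᵐ`, and since `T` is an isometry, `‖S(mτ, 0)‖ = ‖(T S(τ, 0))ᵐ‖`.
Any `t ≥ 0` is `r + mτ` with `r ∈ [0, τ]`, and `S(t, 0) = S(r + mτ, mτ) S(mτ, 0)` where the first
factor has the norm of `S(r, 0)`; this bounds `S(t, 0)` by the bound on `[0, τ]²` times the
bound on the powers.
-/

open scoped ENNReal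

/-- The space `ℓ²(ℤ; ℂ^d)`. -/
noncomputable abbrev L2Z (d : ℕ) := lp (fun _ : ℤ => EuclideanSpace ℂ (Fin d)) 2

theorem lp.norm_eq_of_apply_eq_comp_equiv {ι F : Type*} [NormedAddCommGroup F] {p : ℝ≥0∞}
    (hp : 0 < p.toReal) (σ : ι ≃ ι) {f g : lp (fun _ : ι => F) p} (h : ∀ i, g i = f (σ i)) :
    ‖g‖ = ‖f‖ := by
  have hpow : ‖g‖ ^ p.toReal = ‖f‖ ^ p.toReal := by
    rw [lp.norm_rpow_eq_tsum hp, lp.norm_rpow_eq_tsum hp,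
      ← σ.tsum_eq (fun i => ‖f i‖ ^ p.toReal)]
    simp only [h]
  exact (Real.rpow_left_inj (lp.norm_nonneg' _) (lp.norm_nonneg' _) hp.ne').mp hpow

section IsometricUnits

variable (𝕜 X : Type*) [NontriviallyNormedField 𝕜] [NormedAddCommGroup X] [NormedSpace 𝕜 X]

def isometricUnits : Subgroup (X →L[𝕜] X)ˣ where
  carrier := {u | ∀ x, ‖(u : X →L[𝕜] X) x‖ = ‖x‖}
  one_mem' _ := rfl
  mul_mem' {u v} hu hv x := by
    rw [Units.val_mul, mul_apply_eq_comp, hu, hv]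
  inv_mem' {u} hu x := by
    rw [← hu, ← mul_apply_eq_comp, Units.mul_inv, one_apply_eq_self]

variable {𝕜 X}

theorem norm_coe_le_one_of_mem_isometricUnits {u : (X →L[𝕜] X)ˣ} (hu : u ∈ isometricUnits 𝕜 X) :
    ‖(u : X →L[𝕜] X)‖ ≤ 1 :=
  ContinuousLinearMap.opNorm_le_bound _ zero_le_one fun x => by rw [hu, one_mul]

theorem norm_units_mul_le_of_mem_isometricUnits {u : (X →L[𝕜] X)ˣ}
    (hu : u ∈ isometricUnits 𝕜 X) (B : X →L[𝕜] X) : ‖(u : X →L[𝕜] X) * B‖ ≤ ‖B‖ :=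
  (norm_mul_le _ _).trans
    (mul_le_of_le_one_left (norm_nonneg _) (norm_coe_le_one_of_mem_isometricUnits hu))

theorem norm_mul_units_le_of_mem_isometricUnits {u : (X →L[𝕜] X)ˣ}
    (hu : u ∈ isometricUnits 𝕜 X) (B : X →L[𝕜] X) : ‖B * (u : X →L[𝕜] X)‖ ≤ ‖B‖ :=
  (norm_mul_le _ _).trans
    (mul_le_of_le_one_right (norm_nonneg _) (norm_coe_le_one_of_mem_isometricUnits hu))

theorem norm_units_mul_of_mem_isometricUnits {u : (X →L[𝕜] X)ˣ} (hu : u ∈ isometricUnits 𝕜 X)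
    (B : X →L[𝕜] X) : ‖(u : X →L[𝕜] X) * B‖ = ‖B‖ := by
  refine le_antisymm (norm_units_mul_le_of_mem_isometricUnits hu B) ?_
  calc ‖B‖ = ‖(↑u⁻¹ : X →L[𝕜] X) * (↑u * B)‖ := by rw [Units.inv_mul_cancel_left]
    _ ≤ ‖(u : X →L[𝕜] X) * B‖ := norm_units_mul_le_of_mem_isometricUnits (inv_mem hu) _

theorem norm_mul_units_of_mem_isometricUnits {u : (X →L[𝕜] X)ˣ} (hu : u ∈ isometricUnits 𝕜 X)
    (B : X →L[𝕜] X) : ‖B * (u : X →L[𝕜] X)‖ = ‖B‖ := by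
  refine le_antisymm (norm_mul_units_le_of_mem_isometricUnits hu B) ?_
  calc ‖B‖ = ‖B * ↑u * (↑u⁻¹ : X →L[𝕜] X)‖ := by rw [Units.mul_inv_cancel_right]
    _ ≤ ‖B * (u : X →L[𝕜] X)‖ := norm_mul_units_le_of_mem_isometricUnits (inv_mem hu) _

end IsometricUnits

section Monoid

variable {M : Type*} [Monoid M] {S : ℝ → ℝ → M} {τ : ℝ} {u : Mˣ}

theorem evolution_add_nat_mul_period (hshift : ∀ t s, S (t + τ) (s + τ) = ↑u⁻¹ * S t s * ↑u)
    (m : ℕ) (t s : ℝ) : S (t + m * τ) (s + m * τ) = ↑(u ^ m)⁻¹ * S t s * ↑(u ^ m) := by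
  induction m generalizing t s with
  | zero => simp
  | succ m ih =>
    have hadd (x : ℝ) : x + (m + 1 : ℕ) * τ = x + τ + m * τ := by push_cast; ring
    rw [hadd, hadd, ih, hshift, pow_succ', mul_inv_rev]
    simp only [Units.val_mul, mul_assoc]

theorem evolution_nat_mul_period (hid : ∀ s, S s s = 1) (hcomp : ∀ s r t, S t s = S t r * S r s)
    (hshift : ∀ t s, S (t + τ) (s + τ) = ↑u⁻¹ * S t s * ↑u) (m : ℕ) :
    S (m * τ) 0 = ↑(u ^ m)⁻¹ * (↑u * S τ 0) ^ m := by
  induction m with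
  | zero => simp [hid]
  | succ m ih =>
    have hstep : S ((m + 1 : ℕ) * τ) (m * τ) = ↑(u ^ m)⁻¹ * S τ 0 * ↑(u ^ m) := by
      simpa [add_mul, add_comm] using evolution_add_nat_mul_period hshift m τ 0
    rw [hcomp 0 (m * τ), hstep, ih, pow_succ', pow_succ', mul_inv_rev]
    simp only [Units.val_mul, mul_assoc, Units.mul_inv_cancel_left, Units.inv_mul_cancel_left]

end Monoid

theorem exists_nat_sub_nat_mul_mem_Icc {t τ : ℝ} (ht : 0 ≤ t) (hτ : 0 < τ) :
    ∃ m : ℕ, t - m * τ ∈ Set.Icc 0 τ := by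
  refine ⟨⌊t / τ⌋₊, ?_, ?_⟩
  · have := Nat.floor_le (div_nonneg ht hτ.le)
    rw [le_div_iff₀ hτ] at this
    linarith
  · have := Nat.lt_floor_add_one (t / τ)
    rw [div_lt_iff₀ hτ] at this
    linarith

section Evolution

variable {𝕜 X : Type*} [NontriviallyNormedField 𝕜] [NormedAddCommGroup X] [NormedSpace 𝕜 X]
  {S : ℝ → ℝ → (X →L[𝕜] X)} {τ : ℝ} {u : (X →L[𝕜] X)ˣ}

theorem norm_evolution_add_nat_mul_period (hu : u ∈ isometricUnits 𝕜 X)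
    (hshift : ∀ t s, S (t + τ) (s + τ) = ↑u⁻¹ * S t s * ↑u) (m : ℕ) (t s : ℝ) :
    ‖S (t + m * τ) (s + m * τ)‖ = ‖S t s‖ := by
  rw [evolution_add_nat_mul_period hshift, norm_mul_units_of_mem_isometricUnits (pow_mem hu m),
    norm_units_mul_of_mem_isometricUnits (inv_mem (pow_mem hu m))]

theorem norm_evolution_nat_mul_period (hu : u ∈ isometricUnits 𝕜 X) (hid : ∀ s, S s s = 1)
    (hcomp : ∀ s r t, S t s = S t r * S r s)
    (hshift : ∀ t s, S (t + τ) (s + τ) = ↑u⁻¹ * S t s * ↑u) (m : ℕ) :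
    ‖S (m * τ) 0‖ = ‖(↑u * S τ 0) ^ m‖ := by
  rw [evolution_nat_mul_period hid hcomp hshift,
    norm_units_mul_of_mem_isometricUnits (inv_mem (pow_mem hu m))]

theorem exists_norm_evolution_le_of_norm_monodromy_pow_le (hτ : 0 < τ)
    (hu : u ∈ isometricUnits 𝕜 X) (hid : ∀ s, S s s = 1) (hcomp : ∀ s r t, S t s = S t r * S r s)
    (hshift : ∀ t s, S (t + τ) (s + τ) = ↑u⁻¹ * S t s * ↑u)
    {C₀ : ℝ} (hC₀ : ∀ t ∈ Set.Icc 0 τ, ∀ s ∈ Set.Icc 0 τ, ‖S t s‖ ≤ C₀)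
    {C : ℝ} (hC : ∀ m : ℕ, ‖(↑u * S τ 0) ^ m‖ ≤ C) :
    ∀ t, 0 ≤ t → ‖S t 0‖ ≤ C₀ * C := by
  intro t ht
  obtain ⟨m, hr⟩ := exists_nat_sub_nat_mul_mem_Icc ht hτ
  have h0 : (0 : ℝ) ∈ Set.Icc 0 τ := ⟨le_rfl, hτ.le⟩
  have hC₀_nonneg : 0 ≤ C₀ := (norm_nonneg _).trans (hC₀ 0 h0 0 h0)
  have hhead : ‖S t (m * τ)‖ ≤ C₀ := by
    have := norm_evolution_add_nat_mul_period hu hshift m (t - m * τ) 0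
    rw [sub_add_cancel, zero_add] at this
    exact this ▸ hC₀ _ hr 0 h0
  calc ‖S t 0‖ = ‖S t (m * τ) * S (m * τ) 0‖ := by rw [← hcomp]
    _ ≤ ‖S t (m * τ)‖ * ‖S (m * τ) 0‖ := norm_mul_le _ _
    _ ≤ C₀ * C := by
      rw [norm_evolution_nat_mul_period hu hid hcomp hshift]
      exact mul_le_mul hhead (hC m) (norm_nonneg _) hC₀_nonneg

end Evolution

/-- If an evolution system `S` on `ℓ²(ℤ; ℂ^d)` satisfies
`S(t+τ, s+τ) = T⁻¹ S(t,s) T` for the left shift `T` and is bounded on `[0,τ]²`, then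
`sup_{t ≥ 0} ‖S(t,0)‖ < ∞ ↔ sup_m ‖(T S(τ,0))^m‖ < ∞`; in particular
`‖S(mτ,0)‖ = ‖(T S(τ,0))^m‖` for every `m ∈ ℕ`. -/
theorem evolution_shifted_monodromy_bounded_iff (d : ℕ) (τ : ℝ) (hτ : 0 < τ)
    (T : L2Z d ≃L[ℂ] L2Z d)
    (hT : ∀ (f : L2Z d) (j : ℤ),
      (T f : ∀ _ : ℤ, EuclideanSpace ℂ (Fin d)) j = f (j + 1))
    (S : ℝ → ℝ → (L2Z d →L[ℂ] L2Z d))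
    (hid : ∀ s : ℝ, S s s = 1)
    (hcomp : ∀ s r t : ℝ, S t s = (S t r).comp (S r s))
    (hshift : ∀ t s : ℝ, S (t + τ) (s + τ)
      = ((T.symm : L2Z d →L[ℂ] L2Z d).comp ((S t s).comp (T : L2Z d →L[ℂ] L2Z d))))
    (hbdd : ∃ C : ℝ, ∀ t ∈ Set.Icc (0:ℝ) τ, ∀ s ∈ Set.Icc (0:ℝ) τ, ‖S t s‖ ≤ C) :
    ((∃ C : ℝ, ∀ t : ℝ, 0 ≤ t → ‖S t 0‖ ≤ C) ↔
      (∃ C : ℝ, ∀ m : ℕ, ‖((T : L2Z d →L[ℂ] L2Z d).comp (S τ 0)) ^ m‖ ≤ C)) ∧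
    (∀ m : ℕ, ‖S ((m : ℝ) * τ) 0‖ = ‖((T : L2Z d →L[ℂ] L2Z d).comp (S τ 0)) ^ m‖) := by
  have hu : T.toUnit ∈ isometricUnits ℂ (L2Z d) := fun f =>
    lp.norm_eq_of_apply_eq_comp_equiv (by norm_num) (Equiv.addRight 1) (hT f)
  have hshift' (t s : ℝ) : S (t + τ) (s + τ) = ↑T.toUnit⁻¹ * S t s * ↑T.toUnit := by
    rw [mul_assoc]; exact hshift t s
  have hnorm := norm_evolution_nat_mul_period hu hid hcomp hshift'
  obtain ⟨C₀, hC₀⟩ := hbdd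
  refine ⟨⟨fun ⟨C, hC⟩ => ⟨C, fun m => ?_⟩, fun ⟨C, hC⟩ => ?_⟩, hnorm⟩
  · exact hnorm m ▸ hC _ (by positivity)
  · exact ⟨C₀ * C, exists_norm_evolution_le_of_norm_monodromy_pow_le hτ hu hid hcomp hshift' hC₀ hC⟩
end

section
/- Let d ≥ 1, μ ∈ ℝ, f : ℝ^d → ℝ^d be C¹, I ⊂ ℝ open, and let u : I × ℝ → ℝ^d be C² and 1-periodic in its second variable, and ω : I → ℝ be C¹, such that for every (κ, ζ) ∈ I × ℝ: ω(κ) ∂_ζ u(κ, ζ) = μ[u(κ, ζ+κ) − 2u(κ, ζ) + u(κ, ζ−κ)] + f(u(κ, ζ)). Fix k̄ ∈ I, write ū = u(k̄, ·), and let ψ : ℝ → ℝ^d be C¹ and 1-periodic with ω(k̄) ψ' + μ[ψ(·+k̄) − 2ψ + ψ(·−k̄)] + Df(ū(·))ᵀ ψ = 0 and ∫₀¹ ψ · ∂_ζ ū = 1. Then the linear group velocity formula holds: ω'(k̄) = ∫₀¹ ψ(ζ) · μ[∂_ζ ū(ζ+k̄) − ∂_ζ ū(ζ−k̄)] dζ.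 -/
/-!
Differentiating the profile equation in `κ` at `k̄`, with the mixed partials of `u` commuting,
shows that `w = ∂_κ u(k̄, ·)` solves `L w = ω'(k̄) ∂_ζ ū - μ [∂_ζ ū(· + k̄) - ∂_ζ ū(· - k̄)]`.
As `w` and `ψ` are `1`-periodic, `L` can be moved onto `ψ` inside `∫₀¹ ψ · L w` (integration by
parts for the transport term, the substitutions `ζ ↦ ζ ± k̄` for the lattice Laplacian,
transposition for `Df`), so this integral equals `∫₀¹ L*ψ · w = 0`. The normalisation
`∫₀¹ ψ · ∂_ζ ū = 1` turns this into the formula for `ω'(k̄)`.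
-/

open Function Filter Topology intervalIntegral Matrix

def latticeLaplacian {E : Type*} [AddCommGroup E] [Module ℝ E] (k : ℝ) (v : ℝ → E) (ζ : ℝ) : E :=
  v (ζ + k) - (2:ℝ) • v ζ + v (ζ - k)

section PeriodicPairing

variable {ι : Type*} [Fintype ι]

theorem Function.Periodic.intervalIntegral_comp_add {g : ℝ → ℝ} {T : ℝ} (hg : Periodic g T)
    (a : ℝ) : ∫ x in (0:ℝ)..T, g (x + a) = ∫ x in (0:ℝ)..T, g x := by
  rw [integral_comp_add_right, zero_add, add_comm T, hg.intervalIntegral_add_eq a 0, zero_add]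

theorem integral_dotProduct_comp_add {p q : ℝ → ι → ℝ} (hp : Periodic p 1) (hq : Periodic q 1)
    (a : ℝ) : ∫ ζ in (0:ℝ)..1, p ζ ⬝ᵥ q (ζ + a) = ∫ ζ in (0:ℝ)..1, p (ζ - a) ⬝ᵥ q ζ := by
  have hper : Periodic (fun ζ => p (ζ - a) ⬝ᵥ q ζ) 1 := fun ζ => by
    simp only [add_sub_right_comm ζ 1 a, hp (ζ - a), hq ζ]
  simpa using hper.intervalIntegral_comp_add a

theorem HasDerivAt.dotProduct {p q : ℝ → ι → ℝ} {p' q' : ι → ℝ} {x : ℝ}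
    (hp : HasDerivAt p p' x) (hq : HasDerivAt q q' x) :
    HasDerivAt (fun t => p t ⬝ᵥ q t) (p' ⬝ᵥ q x + p x ⬝ᵥ q') x := by
  unfold _root_.dotProduct
  rw [← Finset.sum_add_distrib]
  exact HasDerivAt.fun_sum fun i _ => (hasDerivAt_pi.1 hp i).mul (hasDerivAt_pi.1 hq i)

theorem integral_deriv_dotProduct_add_eq_zero {p q : ℝ → ι → ℝ} (hp : ContDiff ℝ 1 p)
    (hq : ContDiff ℝ 1 q) (hpp : Periodic p 1) (hqp : Periodic q 1) :
    ∫ ζ in (0:ℝ)..1, (deriv p ζ ⬝ᵥ q ζ + p ζ ⬝ᵥ deriv q ζ) = 0 := by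
  have hderiv (ζ : ℝ) := ((hp.differentiable one_ne_zero ζ).hasDerivAt).dotProduct
    (hq.differentiable one_ne_zero ζ).hasDerivAt
  have hcont : Continuous fun ζ => deriv p ζ ⬝ᵥ q ζ + p ζ ⬝ᵥ deriv q ζ :=
    ((hp.continuous_deriv le_rfl).dotProduct hq.continuous).add
      (hp.continuous.dotProduct (hq.continuous_deriv le_rfl))
  rw [integral_eq_sub_of_hasDerivAt (fun ζ _ => hderiv ζ) (hcont.intervalIntegrable 0 1)]
  simpa [sub_eq_zero] using congrArg₂ dotProduct (hpp 0) (hqp 0)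

theorem integral_dotProduct_latticeLaplacian {p q : ℝ → ι → ℝ} (hpc : Continuous p)
    (hqc : Continuous q) (hp : Periodic p 1) (hq : Periodic q 1) (k : ℝ) :
    ∫ ζ in (0:ℝ)..1, p ζ ⬝ᵥ latticeLaplacian k q ζ
      = ∫ ζ in (0:ℝ)..1, latticeLaplacian k p ζ ⬝ᵥ q ζ := by
  have hshift_right := integral_dotProduct_comp_add hp hq k
  have hshift_left := integral_dotProduct_comp_add hp hq (-k)
  simp only [sub_neg_eq_add, ← sub_eq_add_neg] at hshift_left
  simp only [latticeLaplacian, dotProduct_add, dotProduct_sub, dotProduct_smul, add_dotProduct,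
    sub_dotProduct, smul_dotProduct]
  rw [integral_add, integral_sub, integral_add, integral_sub, hshift_right, hshift_left]
  · ring
  all_goals apply Continuous.intervalIntegrable; fun_prop

theorem dotProduct_transpose_apply {κ : Type*} [Fintype κ] [DecidableEq ι]
    (A : (ι → ℝ) →L[ℝ] (κ → ℝ)) (y : κ → ℝ) (x : ι → ℝ) :
    (fun i => ∑ l, A (Pi.single i 1) l * y l) ⬝ᵥ x = y ⬝ᵥ A x := by
  have hT : (fun i => ∑ l, A (Pi.single i 1) l * y l)
      = (LinearMap.toMatrix' A.toLinearMap)ᵀ *ᵥ y := by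
    ext i; simp [Matrix.mulVec, dotProduct, LinearMap.toMatrix'_apply, mul_comm]
  rw [hT, Matrix.mulVec_transpose, ← Matrix.dotProduct_mulVec, LinearMap.toMatrix'_mulVec]
  rfl

theorem integral_dotProduct_linearization_eq_zero [DecidableEq ι] {c μ k : ℝ}
    {A : ℝ → (ι → ℝ) →L[ℝ] (ι → ℝ)} {ψ v : ℝ → ι → ℝ} (hψ : ContDiff ℝ 1 ψ) (hv : ContDiff ℝ 1 v)
    (hψp : Periodic ψ 1) (hvp : Periodic v 1)
    (hadj : ∀ ζ, c • deriv ψ ζ + μ • latticeLaplacian k ψ ζ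
      + (fun i => ∑ l, A ζ (Pi.single i 1) l * ψ ζ l) = 0) :
    ∫ ζ in (0:ℝ)..1, ψ ζ ⬝ᵥ (-c • deriv v ζ + μ • latticeLaplacian k v ζ + A ζ (v ζ)) = 0 := by
  have hpoint (ζ : ℝ) : ψ ζ ⬝ᵥ (-c • deriv v ζ + μ • latticeLaplacian k v ζ + A ζ (v ζ))
      = -c * (deriv ψ ζ ⬝ᵥ v ζ + ψ ζ ⬝ᵥ deriv v ζ)
        + μ * (ψ ζ ⬝ᵥ latticeLaplacian k v ζ - latticeLaplacian k ψ ζ ⬝ᵥ v ζ) := by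
    have h := congrArg (· ⬝ᵥ v ζ) (hadj ζ)
    simp only [add_dotProduct, smul_dotProduct, zero_dotProduct, dotProduct_transpose_apply,
      smul_eq_mul] at h
    simp only [dotProduct_add, dotProduct_smul, smul_eq_mul]
    linarith
  have hψc := hψ.continuous
  have hvc := hv.continuous
  have hψc' := hψ.continuous_deriv le_rfl
  have hvc' := hv.continuous_deriv le_rfl
  have hΔψ : Continuous (latticeLaplacian k ψ) := by unfold latticeLaplacian; fun_prop
  have hΔv : Continuous (latticeLaplacian k v) := by unfold latticeLaplacian; fun_prop
  rw [integral_congr fun ζ _ => hpoint ζ, integral_add, integral_const_mul, integral_const_mul,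
    integral_deriv_dotProduct_add_eq_zero hψ hv hψp hvp, integral_sub,
    integral_dotProduct_latticeLaplacian hψc hvc hψp hvp, sub_self, mul_zero, mul_zero, add_zero]
  all_goals apply Continuous.intervalIntegrable; fun_prop

end PeriodicPairing

section TwoVariables

variable {E : Type*} [NormedAddCommGroup E] [NormedSpace ℝ E] {u : ℝ → ℝ → E} {x y : ℝ}

theorem HasFDerivAt.hasDerivAt_fst {L : ℝ × ℝ →L[ℝ] E}
    (h : HasFDerivAt (fun p : ℝ × ℝ => u p.1 p.2) L (x, y)) :
    HasDerivAt (fun t => u t y) (L (1, 0)) x :=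
  (h.comp_hasDerivAt x ((hasDerivAt_id x).prodMk (hasDerivAt_const x y)) :)

theorem HasFDerivAt.hasDerivAt_snd {L : ℝ × ℝ →L[ℝ] E}
    (h : HasFDerivAt (fun p : ℝ × ℝ => u p.1 p.2) L (x, y)) :
    HasDerivAt (u x) (L (0, 1)) y :=
  (h.comp_hasDerivAt y ((hasDerivAt_const y x).prodMk (hasDerivAt_id y)) :)

theorem DifferentiableAt.hasDerivAt_comp_add_mul (a : ℝ)
    (h : DifferentiableAt ℝ (fun p : ℝ × ℝ => u p.1 p.2) (x, y + a * x)) :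
    HasDerivAt (fun t => u t (y + a * t))
      (deriv (fun t => u t (y + a * x)) x + a • deriv (u x) (y + a * x)) x := by
  have hline : HasDerivAt (fun t : ℝ => (t, y + a * t)) ((1 : ℝ), a) x :=
    (hasDerivAt_id x).prodMk
      (((hasDerivAt_id x).const_mul a).const_add y |>.congr_deriv (mul_one a))
  have hcomp := h.hasFDerivAt.comp_hasDerivAt x hline
  rwa [h.hasFDerivAt.hasDerivAt_fst.deriv, h.hasFDerivAt.hasDerivAt_snd.deriv,
    ← ContinuousLinearMap.map_smul, ← ContinuousLinearMap.map_add, Prod.smul_mk, Prod.mk_add_mk,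
    smul_eq_mul, smul_eq_mul, mul_zero, mul_one, add_zero, zero_add]

theorem ContDiffAt.hasDerivAt_deriv_comm
    (h : ContDiffAt ℝ 2 (fun p : ℝ × ℝ => u p.1 p.2) (x, y)) :
    HasDerivAt (fun t => deriv (u t) y) (deriv (fun s => deriv (fun t => u t s) x) y) x := by
  set D := fderiv ℝ (fun p : ℝ × ℝ => u p.1 p.2)
  have hdiff : ∀ᶠ p in 𝓝 (x, y), DifferentiableAt ℝ (fun p : ℝ × ℝ => u p.1 p.2) p :=
    (h.eventually (by simp)).mono fun p hp => hp.differentiableAt (by norm_num)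
  have hD : HasFDerivAt D (fderiv ℝ D (x, y)) (x, y) :=
    ((h.fderiv_right (m := 1) le_rfl).differentiableAt one_ne_zero).hasFDerivAt
  have h_snd_fst :
      HasDerivAt (fun t => D (t, y) (0, 1)) (fderiv ℝ D (x, y) (1, 0) (0, 1)) x := by
    simpa using (hD.hasDerivAt_fst (u := fun t s => D (t, s))).clm_apply
      (hasDerivAt_const x ((0 : ℝ), (1 : ℝ)))
  have h_fst_snd :
      HasDerivAt (fun s => D (x, s) (1, 0)) (fderiv ℝ D (x, y) (0, 1) (1, 0)) y := by
    simpa using (hD.hasDerivAt_snd (u := fun t s => D (t, s))).clm_apply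
      (hasDerivAt_const y ((1 : ℝ), (0 : ℝ)))
  have heq_snd : (fun t => deriv (u t) y) =ᶠ[𝓝 x] fun t => D (t, y) (0, 1) :=
    ((continuous_id.prodMk continuous_const).tendsto x |>.eventually hdiff).mono
      fun t ht => ht.hasFDerivAt.hasDerivAt_snd.deriv
  have heq_fst : (fun s => deriv (fun t => u t s) x) =ᶠ[𝓝 y] fun s => D (x, s) (1, 0) :=
    ((continuous_const.prodMk continuous_id).tendsto y |>.eventually hdiff).mono
      fun s hs => hs.hasFDerivAt.hasDerivAt_fst.deriv
  rw [(h_fst_snd.congr_of_eventuallyEq heq_fst).deriv,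
    ← h.isSymmSndFDerivAt (by simp) (1, 0) (0, 1)]
  exact h_snd_fst.congr_of_eventuallyEq heq_snd

theorem ContDiffOn.contDiff_deriv_fst {s : Set (ℝ × ℝ)}
    (hu : ContDiffOn ℝ 2 (fun p : ℝ × ℝ => u p.1 p.2) s) (hs : IsOpen s)
    (hx : ∀ y, (x, y) ∈ s) :
    ContDiff ℝ 1 fun y => deriv (fun t => u t y) x := by
  have hfderiv : (fun y => deriv (fun t => u t y) x)
      = fun y => fderiv ℝ (fun p : ℝ × ℝ => u p.1 p.2) (x, y) (1, 0) := funext fun y =>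
    (((hu.contDiffAt (hs.mem_nhds (hx y))).differentiableAt (by norm_num)).hasFDerivAt
      |>.hasDerivAt_fst).deriv
  rw [hfderiv]
  exact ((hu.fderiv_of_isOpen hs le_rfl).comp_contDiff (contDiff_const.prodMk contDiff_id) hx)
    |>.clm_apply contDiff_const

theorem linearized_profile_equation {μ : ℝ} {f : E → E} {ω : ℝ → ℝ} {kb ζ : ℝ} {w : ℝ → E}
    (hf : DifferentiableAt ℝ f (u kb ζ))
    (hu : ∀ s, ContDiffAt ℝ 2 (fun p : ℝ × ℝ => u p.1 p.2) (kb, s))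
    (hω : DifferentiableAt ℝ ω kb) (hw : ∀ s, HasDerivAt (fun t => u t s) (w s) kb)
    (hprof : ∀ᶠ κ in 𝓝 kb, ∀ s,
      ω κ • deriv (u κ) s = μ • latticeLaplacian κ (u κ) s + f (u κ s)) :
    -ω kb • deriv w ζ + μ • latticeLaplacian kb w ζ + fderiv ℝ f (u kb ζ) (w ζ)
      = deriv ω kb • deriv (u kb) ζ - μ • (deriv (u kb) (ζ + kb) - deriv (u kb) (ζ - kb)) := by
  have hU (s : ℝ) : DifferentiableAt ℝ (fun p : ℝ × ℝ => u p.1 p.2) (kb, s) :=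
    (hu s).differentiableAt (by norm_num)
  have hw_eq : w = fun s => deriv (fun t => u t s) kb := funext fun s => (hw s).deriv.symm
  have hlhs : HasDerivAt (fun t => ω t • deriv (u t) ζ)
      (ω kb • deriv w ζ + deriv ω kb • deriv (u kb) ζ) kb :=
    hω.hasDerivAt.smul (hw_eq ▸ (hu ζ).hasDerivAt_deriv_comm)
  have hplus : HasDerivAt (fun t => u t (ζ + t)) (w (ζ + kb) + deriv (u kb) (ζ + kb)) kb := by
    simpa [(hw _).deriv] using (hU _).hasDerivAt_comp_add_mul (y := ζ) 1
  have hminus : HasDerivAt (fun t => u t (ζ - t)) (w (ζ - kb) - deriv (u kb) (ζ - kb)) kb := by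
    simpa [(hw _).deriv, ← sub_eq_add_neg] using (hU _).hasDerivAt_comp_add_mul (y := ζ) (-1)
  have hrhs := ((((hplus.sub ((hw ζ).const_smul (2 : ℝ))).add hminus).const_smul μ).add
    (hf.hasFDerivAt.comp_hasDerivAt kb (hw ζ)))
  have hderiv := hlhs.unique (hrhs.congr_of_eventuallyEq (hprof.mono fun κ h => h ζ))
  unfold latticeLaplacian
  linear_combination (norm := module) -hderiv

end TwoVariables

theorem linear_group_velocity_formula_general
    (d : ℕ) (μ : ℝ)
    (f : (Fin d → ℝ) → (Fin d → ℝ)) (hf : ContDiff ℝ 1 f)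
    (I : Set ℝ) (hI : IsOpen I) (kb : ℝ) (hkb : kb ∈ I)
    (u : ℝ → ℝ → Fin d → ℝ) (ω : ℝ → ℝ)
    (hu : ContDiffOn ℝ 2 (fun p : ℝ × ℝ => u p.1 p.2) (I ×ˢ Set.univ))
    (hω : ContDiffOn ℝ 1 ω I)
    (huper : ∀ κ ∈ I, ∀ ζ : ℝ, u κ (ζ + 1) = u κ ζ)
    (hprof : ∀ κ ∈ I, ∀ ζ : ℝ, ω κ • deriv (u κ) ζ
      = μ • (u κ (ζ + κ) - (2:ℝ) • u κ ζ + u κ (ζ - κ)) + f (u κ ζ))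
    (ψ : ℝ → Fin d → ℝ) (hψ : ContDiff ℝ 1 ψ) (hψper : ∀ ζ : ℝ, ψ (ζ + 1) = ψ ζ)
    (hψadj : ∀ ζ : ℝ, ω kb • deriv ψ ζ
        + μ • (ψ (ζ + kb) - (2:ℝ) • ψ ζ + ψ (ζ - kb))
        + (fun i => ∑ l : Fin d, fderiv ℝ f (u kb ζ) (Pi.single i 1) l * ψ ζ l) = 0)
    (hnorm : (∫ ζ in (0:ℝ)..1, ∑ i : Fin d, ψ ζ i * deriv (u kb) ζ i) = 1) :
    deriv ω kb = ∫ ζ in (0:ℝ)..1,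
      ∑ i : Fin d, ψ ζ i * (μ * (deriv (u kb) (ζ + kb) i - deriv (u kb) (ζ - kb) i)) := by
  have hIU : IsOpen (I ×ˢ (Set.univ : Set ℝ)) := hI.prod isOpen_univ
  have hkbI (s : ℝ) : (kb, s) ∈ I ×ˢ Set.univ := ⟨hkb, trivial⟩
  have hu_at (s : ℝ) := hu.contDiffAt (hIU.mem_nhds (hkbI s))
  set w := fun s => deriv (fun t => u t s) kb
  have hw : ContDiff ℝ 1 w := hu.contDiff_deriv_fst hIU hkbI
  have hw_deriv (s : ℝ) : HasDerivAt (fun t => u t s) (w s) kb :=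
    ((hu_at s).differentiableAt (by norm_num)).hasFDerivAt.hasDerivAt_fst
      |>.differentiableAt.hasDerivAt
  have hw_per : Periodic w 1 := fun s => EventuallyEq.deriv_eq
    (eventually_of_mem (hI.mem_nhds hkb) fun κ hκ => huper κ hκ s :
      (fun κ => u κ (s + 1)) =ᶠ[𝓝 kb] fun κ => u κ s)
  have hlin (ζ : ℝ) := linearized_profile_equation (ζ := ζ) (hf.differentiable one_ne_zero _)
    hu_at ((hω.differentiableOn one_ne_zero).differentiableAt (hI.mem_nhds hkb)) hw_deriv
    (eventually_of_mem (hI.mem_nhds hkb) hprof)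
  have horth : ∫ ζ in (0:ℝ)..1, ψ ζ ⬝ᵥ (deriv ω kb • deriv (u kb) ζ
      - μ • (deriv (u kb) (ζ + kb) - deriv (u kb) (ζ - kb))) = 0 := by
    simp_rw [← hlin]
    exact integral_dotProduct_linearization_eq_zero hψ hw hψper hw_per hψadj
  have hū : ContDiff ℝ 1 (u kb) :=
    (hu.comp_contDiff (contDiff_const.prodMk contDiff_id) hkbI).of_le one_le_two
  have hψc := hψ.continuous
  have hū' := hū.continuous_deriv le_rfl
  change deriv ω kb = ∫ ζ in (0:ℝ)..1,
    ψ ζ ⬝ᵥ (μ • (deriv (u kb) (ζ + kb) - deriv (u kb) (ζ - kb)))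
  change ∫ ζ in (0:ℝ)..1, ψ ζ ⬝ᵥ deriv (u kb) ζ = 1 at hnorm
  rw [integral_congr fun ζ _ => dotProduct_sub _ _ _, integral_sub,
    integral_congr fun ζ _ => dotProduct_smul (deriv ω kb) _ _, integral_smul, hnorm,
    smul_eq_mul, mul_one, sub_eq_zero] at horth
  · exact horth
  all_goals apply Continuous.intervalIntegrable; fun_prop

/-- (Linear group velocity formula.) If `(u^κ, ω(κ))` is a `C²`/`C¹` family of
`1`-periodic solutions of the lattice reaction-diffusion profile equation and `ψ` spans the
kernel of the adjoint linearized operator with `∫₀¹ ψ · ∂_ζ ū = 1`, then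
`ω'(k̄) = ∫₀¹ ψ(ζ) · μ[∂_ζ ū(ζ+k̄) − ∂_ζ ū(ζ−k̄)] dζ`. -/
theorem linear_group_velocity_formula
    (d : ℕ) (hd : 0 < d) (μ : ℝ)
    (f : (Fin d → ℝ) → (Fin d → ℝ)) (hf : ContDiff ℝ 1 f)
    (I : Set ℝ) (hI : IsOpen I) (kb : ℝ) (hkb : kb ∈ I)
    (u : ℝ → ℝ → Fin d → ℝ) (ω : ℝ → ℝ)
    (hu : ContDiffOn ℝ 2 (fun p : ℝ × ℝ => u p.1 p.2) (I ×ˢ Set.univ))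
    (hω : ContDiffOn ℝ 1 ω I)
    (huper : ∀ κ ∈ I, ∀ ζ : ℝ, u κ (ζ + 1) = u κ ζ)
    (hprof : ∀ κ ∈ I, ∀ ζ : ℝ, ω κ • deriv (u κ) ζ
      = μ • (u κ (ζ + κ) - (2:ℝ) • u κ ζ + u κ (ζ - κ)) + f (u κ ζ))
    (ψ : ℝ → Fin d → ℝ) (hψ : ContDiff ℝ 1 ψ) (hψper : ∀ ζ : ℝ, ψ (ζ + 1) = ψ ζ)
    (hψadj : ∀ ζ : ℝ, ω kb • deriv ψ ζ
        + μ • (ψ (ζ + kb) - (2:ℝ) • ψ ζ + ψ (ζ - kb))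
        + (fun i => ∑ l : Fin d, fderiv ℝ f (u kb ζ) (Pi.single i 1) l * ψ ζ l) = 0)
    (hnorm : (∫ ζ in (0:ℝ)..1, ∑ i : Fin d, ψ ζ i * deriv (u kb) ζ i) = 1) :
    deriv ω kb = ∫ ζ in (0:ℝ)..1,
      ∑ i : Fin d, ψ ζ i * (μ * (deriv (u kb) (ζ + kb) i - deriv (u kb) (ζ - kb) i)) :=
  linear_group_velocity_formula_general d μ f hf I hI kb hkb u ω hu hω huper hprof ψ hψ hψper hψadj
    hnorm
end
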